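/- Let R be a commutative ring, n ∈ ℕ, and g ∈ R⟦X⟧ a power series whose constant coefficient is nilpotent, whose coefficient in each degree k < n is nilpotent, and whose coefficient in degree n is a unit. Then the quotient ring R⟦X⟧/(g) is a free R-module of rank n, with basis the images of 1, X, …, X^{n−1}. -/

import Mathlib

/-!
The coefficients of `g` below degree `n` generate a finitely generated ideal `N` of nilpotents,
hence a nilpotent ideal, so `R` is `N`-adically complete. Modulo `N` the series `g` has order
exactly `n` and its `n`-th coefficient is a unit, so Weierstrass division by `g` works over `R`:
every class in `R⟦X⟧/(g)` has a unique representative among the polynomials of degree `< n`.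
-/

open PowerSeries

theorem IsAdicComplete.of_isNilpotent {R M : Type*} [CommRing R] [AddCommGroup M] [Module R M]
    {I : Ideal R} (hI : IsNilpotent I) : IsAdicComplete I M := by
  obtain ⟨m, hm⟩ := hI
  have hsmul : ∀ k, m ≤ k → (I ^ k • ⊤ : Submodule R M) = ⊥ := fun k hk => by
    rw [← Nat.add_sub_cancel' hk, pow_add, hm, zero_mul, Ideal.zero_eq_bot, Submodule.bot_smul]
  refine
    { haus' := fun x hx => by simpa [hsmul m le_rfl, SModEq.bot] using hx m
      prec' := fun f hf => ⟨f m, fun k => ?_⟩ }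
  rcases le_total k m with hk | hk
  · exact hf hk
  · have := hf hk
    rw [hsmul m le_rfl, SModEq.bot] at this
    rw [this]

theorem PowerSeries.order_map_quotientMk_eq {A : Type*} [CommRing A] {I : Ideal A} {g : A⟦X⟧}
    {n : ℕ} (hlt : ∀ k < n, coeff k g ∈ I) (hn : coeff n g ∉ I) :
    (g.map (Ideal.Quotient.mk I)).order = n := by
  rw [order_eq_nat]
  simp only [coeff_map, ne_eq, Ideal.Quotient.eq_zero_iff_mem]
  exact ⟨hn, hlt⟩

namespace PowerSeries.IsWeierstrassDivisorAt

variable {A : Type*} [CommRing A] {g : A⟦X⟧} {I : Ideal A} [IsAdicComplete I A]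
  (H : g.IsWeierstrassDivisorAt I)

theorem mod'_mem_degreeLT (x : A⟦X⟧ ⧸ Ideal.span {g}) :
    H.mod' x ∈ Polynomial.degreeLT A (g.map (Ideal.Quotient.mk I)).order.toNat := by
  obtain ⟨f, rfl⟩ := Ideal.Quotient.mk_surjective x
  exact Polynomial.mem_degreeLT.2 (H.isWeierstrassDivisionAt_div_mod f).degree_lt

noncomputable def quotientEquivDegreeLT :
    (A⟦X⟧ ⧸ Ideal.span {g}) ≃ₗ[A]
      Polynomial.degreeLT A (g.map (Ideal.Quotient.mk I)).order.toNat where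
  __ := H.mod'.codRestrict _ H.mod'_mem_degreeLT
  invFun p := Ideal.Quotient.mk _ (p : Polynomial A)
  left_inv _ := H.mk_mod'_eq_self
  right_inv p := Subtype.ext (H.mod_coe_eq_self (Polynomial.mem_degreeLT.1 p.2))

theorem quotientEquivDegreeLT_symm_apply
    (p : Polynomial.degreeLT A (g.map (Ideal.Quotient.mk I)).order.toNat) :
    H.quotientEquivDegreeLT.symm p = Ideal.Quotient.mk _ ((p : Polynomial A) : A⟦X⟧) :=
  rfl

noncomputable def basis :
    Module.Basis (Fin (g.map (Ideal.Quotient.mk I)).order.toNat) A (A⟦X⟧ ⧸ Ideal.span {g}) :=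
  (Polynomial.degreeLT.basis A _).map H.quotientEquivDegreeLT.symm

theorem basis_apply (i : Fin (g.map (Ideal.Quotient.mk I)).order.toNat) :
    H.basis i = Ideal.Quotient.mk _ (X ^ (i : ℕ)) := by
  simp [basis, quotientEquivDegreeLT_symm_apply]

end PowerSeries.IsWeierstrassDivisorAt

/-- If `g ∈ R⟦X⟧` is a Weierstrass series of degree `n` (coefficients below degree `n`
nilpotent, degree-`n` coefficient a unit), then `R⟦X⟧/(g)` is free of rank `n` over `R`
with basis the images of `1, X, …, X^(n-1)`. -/
theorem weierstrass_quotient_free {R : Type*} [CommRing R] (n : ℕ) (g : PowerSeries R)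
    (hlt : ∀ k < n, IsNilpotent (PowerSeries.coeff k g))
    (hn : IsUnit (PowerSeries.coeff n g)) :
    ∃ b : Module.Basis (Fin n) R (PowerSeries R ⧸ Ideal.span {g}),
      ∀ i : Fin n, b i = Ideal.Quotient.mk (Ideal.span {g}) (PowerSeries.X ^ (i : ℕ)) := by
  -- over the zero ring `N = ⊤`, so the order of `g` modulo `N` is `⊤` rather than `n`
  rcases subsingleton_or_nontrivial R with _ | _
  · exact ⟨.ofEquivFun (.ofSubsingleton _ _), fun _ => Subsingleton.elim _ _⟩
  set N : Ideal R := Ideal.span ((coeff · g) '' Set.Iio n)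
  have hltN : ∀ k < n, coeff k g ∈ N := fun k hk => Ideal.subset_span ⟨k, hk, rfl⟩
  have hN : N ≤ nilradical R := Ideal.span_le.2 <| by
    rintro _ ⟨k, hk, rfl⟩
    exact hlt k hk
  have hnN : coeff n g ∉ N := fun h =>
    not_isNilpotent_one (hN ((N.eq_top_of_isUnit_mem h hn).symm ▸ Submodule.mem_top))
  have : IsAdicComplete N R := .of_isNilpotent <|
    (Ideal.FG.isNilpotent_iff_le_nilradical (Submodule.fg_span ((Set.finite_Iio n).image _))).2 hN
  have hord : (g.map (Ideal.Quotient.mk N)).order.toNat = n := by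
    rw [order_map_quotientMk_eq hltN hnN, ENat.toNat_natCast]
  have H : g.IsWeierstrassDivisorAt N := by rwa [IsWeierstrassDivisorAt, hord]
  exact ⟨H.basis.reindex (finCongr hord), fun i => by simp [H.basis_apply]⟩
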